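/- Let p, m, n be positive integers, t > 0, U ⊆ ℝⁿ, f : U → ℝᵖ, x* ∈ U with f(x*) = 0, and assume: (a) ‖f(x) − Df(x*)(x − x*)‖₂ ≤ (L/2)‖x − x*‖₂² for all x ∈ U, for some L > 0 and linear map Df(x*); (b) σ‖x − x*‖₂ ≤ ‖f(x)‖₂ for all x ∈ U, for some σ > 0. Let x⁽⁰⁾, …, x⁽ᵐ⁾ ∈ U \ {x*}, r⁽ⁱ⁾ = f(x⁽ⁱ⁾), and assume that d_i = dist₂(r⁽ⁱ⁾, Aff{r⁽⁰⁾, …, r⁽ⁱ⁻¹⁾}) ≥ t · max_{j ∈ {i,…,m}}‖r⁽ʲ⁾‖₂ for every i ∈ {1, …, m}. Let c̃ ∈ ℝ^{m+1} be the unique vector with Σ c̃_i = 1 minimizing ‖Σ_{i=0}^{m} c̃_i r⁽ⁱ⁾‖₂ and assume x̃ = Σ_{i=0}^{m} c̃_i x⁽ⁱ⁾ ∈ U. Then there exists a positive constant C′_m depending only on m such that ‖f(x̃)‖₂ ≤ (L/(2σ²)) C′_m (1 + t^{−2m}) · max_{i ∈ {0,…,m}} ‖r⁽ⁱ⁾‖₂²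 + dist₂(0, Aff{r⁽⁰⁾, …, r⁽ᵐ⁾}). -/

import Mathlib

/-- The affine span `Aff{r⁽⁰⁾, …, r⁽ℓ⁾} = {Σ_{i=0}^{ℓ} cᵢ r⁽ⁱ⁾ : Σ cᵢ = 1}`. -/
noncomputable def affSpan {P : ℕ} (r : ℕ → EuclideanSpace ℝ (Fin P)) (ℓ : ℕ) :
    Set (EuclideanSpace ℝ (Fin P)) :=
  {y | ∃ c : ℕ → ℝ, (∑ i ∈ Finset.range (ℓ + 1), c i) = 1 ∧
    y = ∑ i ∈ Finset.range (ℓ + 1), c i • r i}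

open Finset Metric

lemma mem_affSpan_self {P : ℕ} (r : ℕ → EuclideanSpace ℝ (Fin P)) (ℓ j : ℕ) (hj : j ≤ ℓ) :
    r j ∈ affSpan r ℓ := by
  refine ⟨fun k => if k = j then 1 else 0, ?_, ?_⟩
  · rw [Finset.sum_ite_eq' (Finset.range (ℓ + 1))]
    simp [Nat.lt_succ_of_le hj]
  · simp only [ite_smul, one_smul, zero_smul]
    rw [Finset.sum_ite_eq' (Finset.range (ℓ + 1))]
    simp [Nat.lt_succ_of_le hj]

lemma affSpan_nonempty {P : ℕ} (r : ℕ → EuclideanSpace ℝ (Fin P)) (ℓ : ℕ) :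
    (affSpan r ℓ).Nonempty :=
  ⟨r 0, mem_affSpan_self r ℓ 0 (Nat.zero_le _)⟩

lemma affSpan_comb {P : ℕ} (r : ℕ → EuclideanSpace ℝ (Fin P)) (ℓ : ℕ)
    (F : Finset ℕ) (β : ℝ) (a : EuclideanSpace ℝ (Fin P)) (ha : a ∈ affSpan r ℓ)
    (b : ℕ → ℝ) (w : ℕ → EuclideanSpace ℝ (Fin P))
    (hw : ∀ k ∈ F, w k ∈ affSpan r ℓ)
    (hsum : β + ∑ k ∈ F, b k = 1) :
    β • a + ∑ k ∈ F, b k • w k ∈ affSpan r ℓ := by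
  obtain ⟨ea, hea1, hea2⟩ := ha
  have key : ∀ k ∈ F, ∃ e : ℕ → ℝ, (∑ i ∈ Finset.range (ℓ + 1), e i) = 1 ∧
      w k = ∑ i ∈ Finset.range (ℓ + 1), e i • r i := fun k hk => hw k hk
  choose! e he1 he2 using key
  refine ⟨fun i => β * ea i + ∑ k ∈ F, b k * e k i, ?_, ?_⟩
  · rw [Finset.sum_add_distrib, ← Finset.mul_sum, hea1, Finset.sum_comm]
    have h2 : ∀ k ∈ F, (∑ i ∈ Finset.range (ℓ + 1), b k * e k i) = b k := by
      intro k hk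
      rw [← Finset.mul_sum, he1 k hk, mul_one]
    rw [Finset.sum_congr rfl h2]
    linarith
  · calc β • a + ∑ k ∈ F, b k • w k
        = β • (∑ i ∈ Finset.range (ℓ + 1), ea i • r i)
            + ∑ k ∈ F, b k • (∑ i ∈ Finset.range (ℓ + 1), e k i • r i) := by
          rw [← hea2]
          congr 1
          exact Finset.sum_congr rfl fun k hk => by rw [he2 k hk]
      _ = (∑ i ∈ Finset.range (ℓ + 1), (β * ea i) • r i)
            + ∑ i ∈ Finset.range (ℓ + 1), (∑ k ∈ F, (b k * e k i) • r i) := by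
          rw [Finset.smul_sum, Finset.sum_comm]
          congr 1
          · exact Finset.sum_congr rfl fun i _ => (smul_smul β (ea i) (r i))
          · exact Finset.sum_congr rfl fun k _ => by
              rw [Finset.smul_sum]
              exact Finset.sum_congr rfl fun i _ => (smul_smul (b k) (e k i) (r i))
      _ = ∑ i ∈ Finset.range (ℓ + 1), (β * ea i + ∑ k ∈ F, b k * e k i) • r i := by
          rw [← Finset.sum_add_distrib]
          exact Finset.sum_congr rfl fun i _ => by
            rw [add_smul, Finset.sum_smul]

/-- If `z` is an affine combination with all points except possibly `w i` in `affSpan r ℓ`,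
then `|c i| * infDist (w i) ≤ infDist z`. -/
lemma lb_lemma {P : ℕ} (r : ℕ → EuclideanSpace ℝ (Fin P)) (ℓ : ℕ)
    (F : Finset ℕ) (i : ℕ) (hi : i ∈ F) (c : ℕ → ℝ)
    (hc : ∑ k ∈ F, c k = 1) (w : ℕ → EuclideanSpace ℝ (Fin P))
    (hw : ∀ k ∈ F, k ≠ i → w k ∈ affSpan r ℓ) :
    |c i| * infDist (w i) (affSpan r ℓ) ≤ infDist (∑ k ∈ F, c k • w k) (affSpan r ℓ) := by
  set S := affSpan r ℓ with hS
  have hne : S.Nonempty := affSpan_nonempty r ℓ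
  set z := ∑ k ∈ F, c k • w k with hz
  by_contra hcon
  push_neg at hcon
  obtain ⟨a, haS, hdista⟩ := (infDist_lt_iff hne).mp hcon
  by_cases hci : c i = 0
  · rw [hci] at hdista
    simp only [abs_zero, zero_mul] at hdista
    exact absurd hdista (not_lt.mpr dist_nonneg)
  · set v := ∑ k ∈ F.erase i, c k • w k with hv
    have hzv : z = c i • w i + v := (Finset.add_sum_erase F (fun k => c k • w k) hi).symm
    have hcv : ∑ k ∈ F.erase i, c k = 1 - c i := by
      have := Finset.add_sum_erase F c hi
      linarith
    set a' := (c i)⁻¹ • a + ∑ k ∈ F.erase i, (-(c i)⁻¹ * c k) • w k with ha'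
    have ha'S : a' ∈ S := by
      refine affSpan_comb r ℓ (F.erase i) ((c i)⁻¹) a haS _ w
        (fun k hk => hw k (Finset.mem_of_mem_erase hk) (Finset.ne_of_mem_erase hk)) ?_
      rw [Finset.sum_congr rfl (fun k _ => by ring_nf : ∀ k ∈ F.erase i,
        (-(c i)⁻¹ * c k) = -(c k * (c i)⁻¹))]
      rw [Finset.sum_neg_distrib, ← Finset.sum_mul, hcv]
      field_simp
      ring
    have hkey : c i • (w i - a') = z - a := by
      rw [hzv, ha', smul_sub, smul_add, smul_smul, mul_inv_cancel₀ hci, one_smul,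
        Finset.smul_sum]
      have : ∀ k ∈ F.erase i, c i • ((-(c i)⁻¹ * c k) • w k) = -(c k • w k) := by
        intro k _
        rw [smul_smul]
        have : c i * (-(c i)⁻¹ * c k) = -(c k) := by field_simp
        rw [this, neg_smul]
      rw [Finset.sum_congr rfl this, Finset.sum_neg_distrib, ← hv]
      abel
    have hnorm : ‖z - a‖ = |c i| * ‖w i - a'‖ := by
      rw [← hkey, norm_smul, Real.norm_eq_abs]
    have h1 : |c i| * infDist (w i) S ≤ |c i| * ‖w i - a'‖ := by
      refine mul_le_mul_of_nonneg_left ?_ (abs_nonneg _)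
      rw [← dist_eq_norm]
      exact infDist_le_dist_of_mem ha'S
    rw [← hnorm, ← dist_eq_norm] at h1
    exact absurd hdista (not_lt.mpr h1)

lemma sq_one_add_le (a : ℝ) (ha : 0 ≤ a) : (1 + a) ^ 2 ≤ 2 * (1 + a ^ 2) := by
  nlinarith [sq_nonneg (1 - a)]

lemma stot_sq_bound (S Kv R : ℝ) (hS : 0 ≤ S) (hSK : S ≤ 2 * Kv) (hK1 : 1 ≤ Kv)
    (hKsq : Kv ^ 2 ≤ R) : S ^ 2 + S ≤ 6 * R := by
  nlinarith

set_option maxHeartbeats 1000000 in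
/-- Under the quadratic Taylor estimate (a) and the nondegeneracy
estimate (b) for `f` around `x*`, and the distance lower bound on the error vectors
`r⁽ⁱ⁾ = f(x⁽ⁱ⁾)`, the linearised extrapolation error at `x̃ = Σ c̃ᵢ x⁽ⁱ⁾` satisfies
`‖f(x̃)‖₂ ≤ (L/(2σ²)) C′_m (1 + t^{−2m}) max ‖r⁽ⁱ⁾‖₂² + dist₂(0, Aff{r⁽⁰⁾,…,r⁽ᵐ⁾})`,
where the positive constant `C′_m` depends only on `m`. -/
theorem stmt7 (m : ℕ) (hm : 1 ≤ m) :
    ∃ C' : ℝ, 0 < C' ∧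
    ∀ p n : ℕ, 0 < p → 0 < n →
    ∀ t : ℝ, 0 < t →
    ∀ (U : Set (EuclideanSpace ℝ (Fin n)))
      (f : EuclideanSpace ℝ (Fin n) → EuclideanSpace ℝ (Fin p))
      (xs : EuclideanSpace ℝ (Fin n)) (L σ : ℝ)
      (Df : EuclideanSpace ℝ (Fin n) →L[ℝ] EuclideanSpace ℝ (Fin p)),
    xs ∈ U → f xs = 0 → 0 < L → 0 < σ →
    (∀ x ∈ U, ‖f x - Df (x - xs)‖ ≤ L / 2 * ‖x - xs‖ ^ 2) →
    (∀ x ∈ U, σ * ‖x - xs‖ ≤ ‖f x‖) →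
    ∀ x : ℕ → EuclideanSpace ℝ (Fin n),
    (∀ i ≤ m, x i ∈ U ∧ x i ≠ xs) →
    (∀ i, 1 ≤ i → i ≤ m → ∀ j, i ≤ j → j ≤ m →
      t * ‖f (x j)‖ ≤ Metric.infDist (f (x i)) (affSpan (fun i' => f (x i')) (i - 1))) →
    ∀ ct : ℕ → ℝ,
    (∑ i ∈ Finset.range (m + 1), ct i) = 1 →
    ‖∑ i ∈ Finset.range (m + 1), ct i • f (x i)‖ =
      Metric.infDist 0 (affSpan (fun i' => f (x i')) m) →
    (∑ i ∈ Finset.range (m + 1), ct i • x i) ∈ U →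
    ‖f (∑ i ∈ Finset.range (m + 1), ct i • x i)‖ ≤
      L / (2 * σ ^ 2) * C' * (1 + (t ^ (2 * m))⁻¹) *
        (⨆ i : Fin (m + 1), ‖f (x (i : ℕ))‖ ^ 2) +
      Metric.infDist 0 (affSpan (fun i' => f (x i')) m) := by
  refine ⟨12 * 16 ^ m, by positivity, ?_⟩
  intro p n hp hn t ht U f xs L σ Df hxsU hfxs hL hσ ha hb x hx hdist ct hsum hopt hxtU
  set r : ℕ → EuclideanSpace ℝ (Fin p) := fun i => f (x i) with hr
  set y : EuclideanSpace ℝ (Fin p) := ∑ i ∈ Finset.range (m + 1), ct i • r i with hy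
  set D : ℝ := Metric.infDist 0 (affSpan r m) with hD
  have hyD : ‖y‖ = D := hopt
  have hrm_pos : 0 < ‖r m‖ := by
    have h1 := hb (x m) (hx m le_rfl).1
    have h2 : x m ≠ xs := (hx m le_rfl).2
    have h3 : 0 < ‖x m - xs‖ := by
      rw [norm_pos_iff]
      exact sub_ne_zero_of_ne h2
    calc (0:ℝ) < σ * ‖x m - xs‖ := by positivity
      _ ≤ ‖r m‖ := h1
  -- the master inequality
  have master : ∀ i, 1 ≤ i → i ≤ m →
      |ct i| ≤ (1 + 2 / t) * (1 + ∑ j ∈ Finset.Ioc i m, |ct j|) := by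
    intro i hi1 him
    set S := affSpan r (i - 1) with hSdef
    have hne : S.Nonempty := affSpan_nonempty _ _
    set d := Metric.infDist (r i) S with hd
    have hdge : ∀ j, i ≤ j → j ≤ m → t * ‖r j‖ ≤ d := fun j hij hjm =>
      hdist i hi1 him j hij hjm
    have hdpos : 0 < d :=
      lt_of_lt_of_le (mul_pos ht hrm_pos) (hdge m him le_rfl)
    have hmemS : ∀ j, j < i → r j ∈ S := fun j hj =>
      mem_affSpan_self r (i - 1) j (Nat.le_sub_one_of_lt hj)
    set G := ∑ j ∈ Finset.Ioc i m, |ct j| with hG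
    have hGnn : 0 ≤ G := Finset.sum_nonneg fun j _ => abs_nonneg _
    have hri : ‖r i‖ ≤ d / t := by
      rw [le_div_iff₀ ht, mul_comm]
      exact hdge i le_rfl him
    have hyle : ‖y‖ ≤ ‖r i‖ := by
      rw [hyD, hD]
      calc Metric.infDist 0 (affSpan r m) ≤ dist 0 (r i) :=
            infDist_le_dist_of_mem (mem_affSpan_self r m i him)
        _ = ‖r i‖ := by rw [dist_zero_left]
    have hmain : |ct i| * d ≤ ((1 + 2 / t) * (1 + G)) * d := by
      refine le_of_forall_pos_le_add fun ε' hε' => ?_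
      set ε := ε' / (G + 1) with hεdef
      have hεpos : 0 < ε := by positivity
      have hGε : G * ε ≤ ε' := by
        rw [hεdef, mul_div_assoc']
        rw [div_le_iff₀ (by positivity : (0:ℝ) < G + 1)]
        nlinarith
      have hlt : Metric.infDist (r i) S < d + ε := by
        rw [← hd]; linarith
      obtain ⟨a, haS, hadist⟩ := (infDist_lt_iff hne).mp hlt
      set w : ℕ → EuclideanSpace ℝ (Fin p) := fun j => if i < j then a else r j with hw
      have hwi : w i = r i := by simp [hw]
      have hwmem : ∀ k ∈ Finset.range (m + 1), k ≠ i → w k ∈ S := by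
        intro k _ hki
        by_cases hik : i < k
        · simpa [hw, hik] using haS
        · have : k < i := by omega
          simpa [hw, hik] using hmemS k this
      have hiF : i ∈ Finset.range (m + 1) := by
        simp only [Finset.mem_range]; omega
      have hlb := lb_lemma r (i - 1) (Finset.range (m + 1)) i hiF ct hsum w hwmem
      rw [hwi] at hlb
      set z := ∑ k ∈ Finset.range (m + 1), ct k • w k with hz
      have h2 : Metric.infDist z S ≤ Metric.infDist y S + dist z y :=
        infDist_le_infDist_add_dist
      have h3 : Metric.infDist y S ≤ d + 2 * (d / t) := by
        calc Metric.infDist y S ≤ Metric.infDist (r i) S + dist y (r i) :=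
              infDist_le_infDist_add_dist
          _ ≤ d + (‖y‖ + ‖r i‖) := by
              rw [← hd, dist_eq_norm]
              gcongr
              exact norm_sub_le y (r i)
          _ ≤ d + 2 * (d / t) := by
              have := hyle.trans hri
              linarith
      have hzy : z - y = ∑ k ∈ Finset.Ioc i m, ct k • (a - r k) := by
        have e1 : z - y = ∑ k ∈ Finset.range (m + 1), ct k • (w k - r k) := by
          rw [hz, hy, ← Finset.sum_sub_distrib]
          exact Finset.sum_congr rfl fun k _ => (smul_sub (ct k) (w k) (r k)).symm
        have e2 : ∑ k ∈ Finset.Ioc i m, ct k • (w k - r k)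
            = ∑ k ∈ Finset.range (m + 1), ct k • (w k - r k) := by
          refine Finset.sum_subset (fun k hk => ?_) (fun k hk hki => ?_)
          · simp only [Finset.mem_Ioc] at hk
            simp only [Finset.mem_range]; omega
          · simp only [Finset.mem_Ioc, Finset.mem_range] at hk hki
            have hik : ¬ i < k := by omega
            simp [hw, hik]
        rw [e1, ← e2]
        refine Finset.sum_congr rfl fun k hk => ?_
        simp only [Finset.mem_Ioc] at hk
        simp [hw, hk.1]
      have h4 : dist z y ≤ G * (d + ε + 2 * (d / t)) := by
        rw [dist_eq_norm, hzy]
        calc ‖∑ k ∈ Finset.Ioc i m, ct k • (a - r k)‖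
            ≤ ∑ k ∈ Finset.Ioc i m, |ct k| * ‖a - r k‖ := by
              refine (norm_sum_le _ _).trans (le_of_eq ?_)
              exact Finset.sum_congr rfl fun k _ => by
                rw [norm_smul, Real.norm_eq_abs]
          _ ≤ ∑ k ∈ Finset.Ioc i m, |ct k| * (d + ε + 2 * (d / t)) := by
              refine Finset.sum_le_sum fun k hk => ?_
              refine mul_le_mul_of_nonneg_left ?_ (abs_nonneg _)
              simp only [Finset.mem_Ioc] at hk
              have h5 : ‖a - r i‖ < d + ε := by
                rw [← dist_eq_norm, dist_comm]
                exact hadist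
              have h7 : ‖r k‖ ≤ d / t := by
                rw [le_div_iff₀ ht, mul_comm]
                exact hdge k (le_of_lt hk.1) hk.2
              calc ‖a - r k‖ = ‖(a - r i) + (r i - r k)‖ := by
                    rw [sub_add_sub_cancel]
                _ ≤ ‖a - r i‖ + ‖r i - r k‖ := norm_add_le _ _
                _ ≤ ‖a - r i‖ + (‖r i‖ + ‖r k‖) := by
                    gcongr
                    exact norm_sub_le _ _
                _ ≤ d + ε + 2 * (d / t) := by linarith
          _ = G * (d + ε + 2 * (d / t)) := by rw [hG, ← Finset.sum_mul]
      have hchain : |ct i| * d ≤ (d + 2 * (d / t)) + G * (d + ε + 2 * (d / t)) := by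
        calc |ct i| * d ≤ Metric.infDist z S := hlb
          _ ≤ Metric.infDist y S + dist z y := h2
          _ ≤ (d + 2 * (d / t)) + G * (d + ε + 2 * (d / t)) := by
              exact add_le_add h3 h4
      have heq : (d + 2 * (d / t)) + G * (d + ε + 2 * (d / t))
          = ((1 + 2 / t) * (1 + G)) * d + G * ε := by ring
      rw [heq] at hchain
      linarith
    exact le_of_mul_le_mul_right hmain hdpos
  -- downward recursion on the coefficient sums
  have hKb : (1:ℝ) ≤ 2 + 2 / t := by
    have : 0 < 2 / t := by positivity
    linarith
  have hrec : ∀ k, k ≤ m → 1 + ∑ j ∈ Finset.Ioc (m - k) m, |ct j| ≤ (2 + 2 / t) ^ k := by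
    intro k
    induction k with
    | zero => intro _; simp
    | succ k ih =>
      intro hk1
      have hkm : k ≤ m := by omega
      have ihk := ih hkm
      set i := m - k with hidef
      have hi1 : 1 ≤ i := by omega
      have him : i ≤ m := by omega
      have hset : Finset.Ioc (m - (k + 1)) m = insert i (Finset.Ioc i m) := by
        ext j
        simp only [Finset.mem_Ioc, Finset.mem_insert]
        omega
      rw [hset, Finset.sum_insert (by simp)]
      have hmi := master i hi1 him
      have hGnn : 0 ≤ ∑ j ∈ Finset.Ioc i m, |ct j| :=
        Finset.sum_nonneg fun _ _ => abs_nonneg _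
      have h2t : (0:ℝ) ≤ 2 / t := by positivity
      calc 1 + (|ct i| + ∑ j ∈ Finset.Ioc i m, |ct j|)
          ≤ (2 + 2 / t) * (1 + ∑ j ∈ Finset.Ioc i m, |ct j|) := by nlinarith
        _ ≤ (2 + 2 / t) * (2 + 2 / t) ^ k := by
            refine mul_le_mul_of_nonneg_left ihk (by linarith)
        _ = (2 + 2 / t) ^ (k + 1) := by rw [pow_succ]; ring
  set K := (2 + 2 / t) ^ m with hK
  have hK1 : (1:ℝ) ≤ K := one_le_pow₀ hKb
  have hrecm : 1 + ∑ j ∈ Finset.Ioc 0 m, |ct j| ≤ K := by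
    have := hrec m le_rfl
    rwa [Nat.sub_self] at this
  have hrange : Finset.range (m + 1) = insert 0 (Finset.Ioc 0 m) := by
    ext j
    simp only [Finset.mem_range, Finset.mem_insert, Finset.mem_Ioc]
    omega
  set Stot := ∑ j ∈ Finset.range (m + 1), |ct j| with hStot
  have hStotnn : 0 ≤ Stot := Finset.sum_nonneg fun _ _ => abs_nonneg _
  have hct0 : |ct 0| ≤ 1 + ∑ j ∈ Finset.Ioc 0 m, |ct j| := by
    have h0 : ct 0 = 1 - ∑ j ∈ Finset.Ioc 0 m, ct j := by
      rw [hrange, Finset.sum_insert (by simp)] at hsum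
      linarith
    have habs : |∑ j ∈ Finset.Ioc 0 m, ct j| ≤ ∑ j ∈ Finset.Ioc 0 m, |ct j| :=
      Finset.abs_sum_le_sum_abs _ _
    calc |ct 0| = |1 - ∑ j ∈ Finset.Ioc 0 m, ct j| := by rw [h0]
      _ ≤ |(1:ℝ)| + |∑ j ∈ Finset.Ioc 0 m, ct j| := abs_sub _ _
      _ ≤ 1 + ∑ j ∈ Finset.Ioc 0 m, |ct j| := by
          rw [abs_one]
          linarith
  have hStotK : Stot ≤ 2 * K := by
    rw [hStot, hrange, Finset.sum_insert (by simp)]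
    linarith
  -- numeric bound on K
  have hpow : (1 + 1 / t) ^ m ≤ 2 ^ m * (1 + (1 / t) ^ m) := by
    set u := 1 / t with hu
    have hu0 : 0 ≤ u := by positivity
    have hum : (0:ℝ) ≤ u ^ m := by positivity
    have h2m : (0:ℝ) ≤ 2 ^ m := by positivity
    rcases le_total u 1 with h | h
    · calc (1 + u) ^ m ≤ 2 ^ m :=
            pow_le_pow_left₀ (by linarith) (by linarith) m
        _ ≤ 2 ^ m * (1 + u ^ m) :=
            le_mul_of_one_le_right h2m (by linarith)
    · calc (1 + u) ^ m ≤ (2 * u) ^ m :=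
            pow_le_pow_left₀ (by linarith) (by linarith) m
        _ = 2 ^ m * u ^ m := mul_pow 2 u m
        _ ≤ 2 ^ m * (1 + u ^ m) :=
            mul_le_mul_of_nonneg_left (by linarith) h2m
  have hKle : K ≤ 4 ^ m * (1 + (1 / t) ^ m) := by
    have e1 : K = 2 ^ m * (1 + 1 / t) ^ m := by
      rw [hK, ← mul_pow]
      congr 1
      ring
    have h2 : (0:ℝ) < 2 ^ m := by positivity
    calc K = 2 ^ m * (1 + 1 / t) ^ m := e1
      _ ≤ 2 ^ m * (2 ^ m * (1 + (1 / t) ^ m)) := by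
          exact mul_le_mul_of_nonneg_left hpow h2.le
      _ = 4 ^ m * (1 + (1 / t) ^ m) := by
          rw [← mul_assoc, ← mul_pow]
          norm_num
  have hinv : ((1 / t) ^ m) ^ 2 = (t ^ (2 * m))⁻¹ := by
    rw [one_div, ← inv_pow, ← pow_mul, mul_comm m 2]
  have hKsq : K ^ 2 ≤ 16 ^ m * (2 * (1 + (t ^ (2 * m))⁻¹)) := by
    have hKnn : (0:ℝ) ≤ K := by linarith
    have h4 : (0:ℝ) ≤ 4 ^ m * (1 + (1 / t) ^ m) := by positivity
    have h5 : K ^ 2 ≤ (4 ^ m * (1 + (1 / t) ^ m)) ^ 2 := by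
      exact pow_le_pow_left₀ hKnn hKle 2
    have h6 : (4 ^ m * (1 + (1 / t) ^ m)) ^ 2
        = (16:ℝ) ^ m * (1 + (1 / t) ^ m) ^ 2 := by
      rw [mul_pow, ← pow_mul, mul_comm m 2, pow_mul]
      norm_num
    have hu2 : (0:ℝ) ≤ (1 / t) ^ m := by positivity
    have h7 : (1 + (1 / t) ^ m) ^ 2 ≤ 2 * (1 + ((1 / t) ^ m) ^ 2) :=
      sq_one_add_le _ hu2
    have h8 : (0:ℝ) ≤ (16:ℝ) ^ m := by positivity
    calc K ^ 2 ≤ (16:ℝ) ^ m * (1 + (1 / t) ^ m) ^ 2 := by rw [← h6]; exact h5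
      _ ≤ (16:ℝ) ^ m * (2 * (1 + ((1 / t) ^ m) ^ 2)) := by
          exact mul_le_mul_of_nonneg_left h7 h8
      _ = 16 ^ m * (2 * (1 + (t ^ (2 * m))⁻¹)) := by rw [hinv]
  have hSS : Stot ^ 2 + Stot ≤ 12 * 16 ^ m * (1 + (t ^ (2 * m))⁻¹) := by
    have h9 := stot_sq_bound Stot K (16 ^ m * (2 * (1 + (t ^ (2 * m))⁻¹)))
      hStotnn hStotK hK1 hKsq
    linarith
  -- sup norms
  set M : ℝ := ⨆ i : Fin (m + 1), ‖r (i : ℕ)‖ with hM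
  set M2 : ℝ := ⨆ i : Fin (m + 1), ‖r (i : ℕ)‖ ^ 2 with hM2d
  have hMle : ∀ j, j ≤ m → ‖r j‖ ≤ M := by
    intro j hj
    have := le_ciSup (Finite.bddAbove_range fun i : Fin (m + 1) => ‖r (i : ℕ)‖)
      (⟨j, by omega⟩ : Fin (m + 1))
    simpa using this
  have hMnn : 0 ≤ M := le_trans (norm_nonneg _) (hMle 0 (by omega))
  have hM2 : M ^ 2 ≤ M2 := by
    obtain ⟨i0, hi0⟩ := exists_eq_ciSup_of_finite (f := fun i : Fin (m + 1) => ‖r (i : ℕ)‖)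
    have h1 : M = ‖r (i0 : ℕ)‖ := by rw [hM, ← hi0]
    rw [h1]
    exact le_ciSup (Finite.bddAbove_range fun i : Fin (m + 1) => ‖r (i : ℕ)‖ ^ 2) i0
  have hxsb : ∀ j, j ≤ m → ‖x j - xs‖ ≤ M / σ := by
    intro j hj
    have h1 := hb (x j) (hx j hj).1
    rw [le_div_iff₀ hσ, mul_comm]
    exact le_trans h1 (hMle j hj)
  set xt : EuclideanSpace ℝ (Fin n) := ∑ i ∈ Finset.range (m + 1), ct i • x i with hxtd
  have hxt : xt - xs = ∑ j ∈ Finset.range (m + 1), ct j • (x j - xs) := by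
    rw [Finset.sum_congr rfl (fun j _ => smul_sub (ct j) (x j) xs),
      Finset.sum_sub_distrib, ← Finset.sum_smul, hsum, one_smul]
  have hxtnorm : ‖xt - xs‖ ≤ Stot * (M / σ) := by
    rw [hxt]
    calc ‖∑ j ∈ Finset.range (m + 1), ct j • (x j - xs)‖
        ≤ ∑ j ∈ Finset.range (m + 1), |ct j| * ‖x j - xs‖ := by
          refine (norm_sum_le _ _).trans (le_of_eq ?_)
          exact Finset.sum_congr rfl fun j _ => by rw [norm_smul, Real.norm_eq_abs]
      _ ≤ ∑ j ∈ Finset.range (m + 1), |ct j| * (M / σ) := by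
          refine Finset.sum_le_sum fun j hj => ?_
          refine mul_le_mul_of_nonneg_left ?_ (abs_nonneg _)
          exact hxsb j (by simpa using Nat.lt_succ_iff.mp (Finset.mem_range.mp hj))
      _ = Stot * (M / σ) := by rw [hStot, ← Finset.sum_mul]
  have hDf2 : Df (xt - xs) = y - ∑ j ∈ Finset.range (m + 1), ct j • (r j - Df (x j - xs)) := by
    have hDf1 : Df (xt - xs) = ∑ j ∈ Finset.range (m + 1), ct j • Df (x j - xs) := by
      rw [hxt, map_sum]
      exact Finset.sum_congr rfl fun j _ => by rw [map_smul]
    rw [hDf1, hy, ← Finset.sum_sub_distrib]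
    exact Finset.sum_congr rfl fun j _ => by
      rw [← smul_sub, sub_sub_cancel]
  have hDfbound : ‖Df (xt - xs)‖ ≤ D + Stot * (L / 2 * (M / σ) ^ 2) := by
    rw [hDf2]
    calc ‖y - ∑ j ∈ Finset.range (m + 1), ct j • (r j - Df (x j - xs))‖
        ≤ ‖y‖ + ‖∑ j ∈ Finset.range (m + 1), ct j • (r j - Df (x j - xs))‖ :=
          norm_sub_le _ _
      _ ≤ D + Stot * (L / 2 * (M / σ) ^ 2) := by
          rw [hyD]
          refine add_le_add_right ?_ D
          calc ‖∑ j ∈ Finset.range (m + 1), ct j • (r j - Df (x j - xs))‖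
              ≤ ∑ j ∈ Finset.range (m + 1), |ct j| * ‖r j - Df (x j - xs)‖ := by
                refine (norm_sum_le _ _).trans (le_of_eq ?_)
                exact Finset.sum_congr rfl fun j _ => by rw [norm_smul, Real.norm_eq_abs]
            _ ≤ ∑ j ∈ Finset.range (m + 1), |ct j| * (L / 2 * (M / σ) ^ 2) := by
                refine Finset.sum_le_sum fun j hj => ?_
                refine mul_le_mul_of_nonneg_left ?_ (abs_nonneg _)
                have hjm : j ≤ m := Nat.lt_succ_iff.mp (Finset.mem_range.mp hj)
                have h1 := ha (x j) (hx j hjm).1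
                have h2 : ‖x j - xs‖ ^ 2 ≤ (M / σ) ^ 2 :=
                  pow_le_pow_left₀ (norm_nonneg _) (hxsb j hjm) 2
                calc ‖r j - Df (x j - xs)‖ ≤ L / 2 * ‖x j - xs‖ ^ 2 := h1
                  _ ≤ L / 2 * (M / σ) ^ 2 := by
                      refine mul_le_mul_of_nonneg_left h2 (by linarith)
            _ = Stot * (L / 2 * (M / σ) ^ 2) := by rw [hStot, ← Finset.sum_mul]
  have hfinal1 : ‖f xt‖ ≤ L / 2 * (Stot * (M / σ)) ^ 2 + (D + Stot * (L / 2 * (M / σ) ^ 2)) := by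
    calc ‖f xt‖ = ‖(f xt - Df (xt - xs)) + Df (xt - xs)‖ := by rw [sub_add_cancel]
      _ ≤ ‖f xt - Df (xt - xs)‖ + ‖Df (xt - xs)‖ := norm_add_le _ _
      _ ≤ L / 2 * ‖xt - xs‖ ^ 2 + (D + Stot * (L / 2 * (M / σ) ^ 2)) := by
          refine add_le_add (ha xt hxtU) hDfbound
      _ ≤ L / 2 * (Stot * (M / σ)) ^ 2 + (D + Stot * (L / 2 * (M / σ) ^ 2)) := by
          refine add_le_add_left ?_ _
          refine mul_le_mul_of_nonneg_left ?_ (by linarith)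
          exact pow_le_pow_left₀ (norm_nonneg _) hxtnorm 2
  have heq2 : L / 2 * (Stot * (M / σ)) ^ 2 + Stot * (L / 2 * (M / σ) ^ 2)
      = L / (2 * σ ^ 2) * ((Stot ^ 2 + Stot) * M ^ 2) := by
    field_simp
  have hfinal2 : L / (2 * σ ^ 2) * ((Stot ^ 2 + Stot) * M ^ 2)
      ≤ L / (2 * σ ^ 2) * (12 * 16 ^ m) * (1 + (t ^ (2 * m))⁻¹) * M2 := by
    have hA : (0:ℝ) ≤ L / (2 * σ ^ 2) := by positivity
    have hv : (0:ℝ) ≤ 1 + (t ^ (2 * m))⁻¹ := by positivity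
    have h1 : (Stot ^ 2 + Stot) * M ^ 2 ≤ (12 * 16 ^ m * (1 + (t ^ (2 * m))⁻¹)) * M2 := by
      refine mul_le_mul hSS hM2 (sq_nonneg M) (by positivity)
    calc L / (2 * σ ^ 2) * ((Stot ^ 2 + Stot) * M ^ 2)
        ≤ L / (2 * σ ^ 2) * ((12 * 16 ^ m * (1 + (t ^ (2 * m))⁻¹)) * M2) :=
          mul_le_mul_of_nonneg_left h1 hA
      _ = L / (2 * σ ^ 2) * (12 * 16 ^ m) * (1 + (t ^ (2 * m))⁻¹) * M2 := by ring
  calc ‖f xt‖ ≤ L / 2 * (Stot * (M / σ)) ^ 2 + (D + Stot * (L / 2 * (M / σ) ^ 2)) := hfinal1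
    _ = L / (2 * σ ^ 2) * ((Stot ^ 2 + Stot) * M ^ 2) + D := by rw [← heq2]; ring
    _ ≤ L / (2 * σ ^ 2) * (12 * 16 ^ m) * (1 + (t ^ (2 * m))⁻¹) * M2 + D :=
        add_le_add_left hfinal2 D
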